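/- Let G be a groupoid and let c be a ℤ-valued cocycle on G, i.e. an assignment of an integer c(γ) to each arrow γ of G such that c(γγ') = c(γ) + c(γ') whenever γ and γ' are composable. If c is strongly surjective, meaning that for every object u of G and every integer n there is an arrow γ with range u and c(γ) = n, then c is unperforated: for every arrow γ with c(γ) = n > 0 there exist composable arrows γ₁, …, γₙ with c(γᵢ) = 1 for each i and γ = γ₁γ₂⋯γₙ. -/

import Mathlib

open CategoryTheory

/-- `FactorsAs c k n γ` says that the arrow `γ` of the groupoid `G` can be written as a
composite of `n` composable arrows, each of which is assigned the value `k` by `c`. -/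
def FactorsAs {G : Type*} [Groupoid G] (c : ∀ ⦃x y : G⦄, (x ⟶ y) → ℤ) (k : ℤ) :
    ℕ → ∀ ⦃x y : G⦄, (x ⟶ y) → Prop
  | 0 => fun {_ _} _ => False
  | 1 => fun {_ _} γ => c γ = k
  | (n + 2) => fun {x y} γ => ∃ (z : G) (f : x ⟶ z) (g : z ⟶ y),
      c f = k ∧ γ = f ≫ g ∧ FactorsAs c k (n + 1) g

/-!
Peel off one arrow at a time: to split off a first factor of value `k` from `γ : x ⟶ y`, pick
by strong surjectivity an arrow `δ : z ⟶ x` of value `-k`; then `γ = δ⁻¹ ≫ (δ ≫ γ)`, where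
`δ⁻¹` has value `k` and `δ ≫ γ` has value `c γ - k`. Induction on the number of factors
finishes the proof.
-/

section Cocycle

variable {G : Type*} [Groupoid G] {c : ∀ ⦃x y : G⦄, (x ⟶ y) → ℤ}
variable (hcocycle : ∀ ⦃x y z : G⦄ (f : x ⟶ y) (g : y ⟶ z), c (f ≫ g) = c f + c g)
include hcocycle

theorem cocycle_id (x : G) : c (𝟙 x) = 0 := by
  have h := hcocycle (𝟙 x) (𝟙 x)
  rw [Category.id_comp] at h
  omega

theorem cocycle_inv {x y : G} (f : x ⟶ y) : c (Groupoid.inv f) = -c f := by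
  have h := hcocycle f (Groupoid.inv f)
  rw [Groupoid.comp_inv, cocycle_id hcocycle] at h
  omega

theorem exists_comp_eq_of_stronglySurjective
    (hsurj : ∀ (u : G) (n : ℤ), ∃ (x : G) (γ : x ⟶ u), c γ = n)
    {x y : G} (γ : x ⟶ y) (k : ℤ) :
    ∃ (z : G) (f : x ⟶ z) (g : z ⟶ y), c f = k ∧ c g = c γ - k ∧ γ = f ≫ g := by
  obtain ⟨z, δ, hδ⟩ := hsurj x (-k)
  refine ⟨z, Groupoid.inv δ, δ ≫ γ, ?_, ?_, ?_⟩
  · rw [cocycle_inv hcocycle, hδ, neg_neg]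
  · rw [hcocycle, hδ]
    ring
  · rw [← Category.assoc, Groupoid.inv_comp, Category.id_comp]

theorem FactorsAs.of_stronglySurjective
    (hsurj : ∀ (u : G) (n : ℤ), ∃ (x : G) (γ : x ⟶ u), c γ = n) (k : ℤ) (n : ℕ) :
    ∀ ⦃x y : G⦄ (γ : x ⟶ y), c γ = (n + 1) * k → FactorsAs c k (n + 1) γ := by
  induction n with
  | zero =>
    intro x y γ hγ
    simpa only [FactorsAs, CharP.cast_eq_zero, zero_add, one_mul] using hγ
  | succ n ih =>
    intro x y γ hγ
    obtain ⟨z, f, g, hf, hg, rfl⟩ := exists_comp_eq_of_stronglySurjective hcocycle hsurj γ k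
    exact ⟨z, f, g, hf, rfl, ih g (by push_cast at hγ; rw [hg, hγ]; ring)⟩

end Cocycle

/-- If a ℤ-valued cocycle `c` on a groupoid `G` is strongly surjective (for every object `u`
and every integer `n` there is an arrow with range `u` and cocycle value `n`), then `c` is
unperforated: every arrow `γ` with `c γ = n > 0` is a composite of `n` composable arrows,
each of cocycle value `1`. -/
theorem strongly_surjective_cocycle_is_unperforated
    {G : Type*} [Groupoid G]
    (c : ∀ ⦃x y : G⦄, (x ⟶ y) → ℤ)
    (hcocycle : ∀ ⦃x y z : G⦄ (f : x ⟶ y) (g : y ⟶ z), c (f ≫ g) = c f + c g)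
    (hsurj : ∀ (u : G) (n : ℤ), ∃ (x : G) (γ : x ⟶ u), c γ = n) :
    ∀ ⦃x y : G⦄ (γ : x ⟶ y) (n : ℕ), 0 < n → c γ = (n : ℤ) →
      FactorsAs c 1 n γ := by
  intro x y γ n hn hγ
  obtain ⟨m, rfl⟩ := Nat.exists_eq_add_one_of_ne_zero hn.ne'
  exact FactorsAs.of_stronglySurjective hcocycle hsurj 1 m γ (by simpa using hγ)
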